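/- For every real ν with -1 < ν < 0, the integral ∫_0^{π/2} sin((2ν+1)θ)/sin θ dθ equals π/2 + (sin(νπ)/2)·(ψ((ν+2)/2) − ψ((ν+1)/2)), where ψ is the digamma function. -/

import Mathlib

open Real

/-- The digamma function: the logarithmic derivative of the Gamma function. -/
noncomputable def digamma (x : ℝ) : ℝ := deriv (fun y => Real.log (Real.Gamma y)) x

/-!
Write `I a = ∫₀^{π/2} sin (a θ) / sin θ dθ`. Since
`sin ((p+1)θ) - sin ((p-1)θ) = 2 cos (p θ) sin θ`, we get
`I (p+1) - I (p-1) = 2 sin (p π / 2) / p`; hence `I (2n+1) = π / 2` for every `n : ℕ`, and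
iterating from `a = 2ν + 1` gives
`I (2ν+1) = I (2ν+1+2K) + sin (ν π) ∑_{k<K} (-1)^k / (ν+1+k)`.
By the Riemann–Lebesgue lemma `I (2ν+1+2K) - I (2K+1) → 0`, so `I (2ν+1+2K) → π / 2`, while
the alternating series sums to Nielsen's beta function
`β (ν+1) = (ψ ((ν+2)/2) - ψ ((ν+1)/2)) / 2`: the recurrence `β x + β (x+1) = 1 / x` together
with `0 ≤ β x ≤ 1 / x` (monotonicity of `ψ`, i.e. log-convexity of `Γ`) makes the tail of the
series vanish.
-/

open MeasureTheory Filter Topology Set FourierTransform RealInnerProductSpace Interval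
  intervalIntegral

theorem tendsto_integral_cos_mul_mul_atTop {f : ℝ → ℝ} (hf : Integrable f) :
    Tendsto (fun c : ℝ => ∫ x, cos (c * x) * f x) atTop (𝓝 0) := by
  have hc : Tendsto (fun c : ℝ => c / (2 * π)) atTop (cocompact ℝ) :=
    (tendsto_id.atTop_div_const (by positivity)).mono_right
      (cocompact_eq_atBot_atTop (α := ℝ) ▸ le_sup_right)
  have hRL := (Complex.continuous_re.tendsto 0).comp
    ((tendsto_integral_exp_inner_smul_cocompact fun x => (f x : ℂ)).comp hc)
  refine hRL.congr fun c => ?_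
  have hint : Integrable fun x : ℝ => 𝐞 (-⟪x, c / (2 * π)⟫) • (f x : ℂ) :=
    (Real.fourierIntegral_convergent_iff _).2 hf.ofReal
  refine (integral_re hint).symm.trans ?_
  congr 1
  funext x
  have harg : 2 * π * -⟪x, c / (2 * π)⟫ = -(c * x) := by
    rw [Real.inner_apply]
    field_simp
  rw [Circle.smul_def, Real.fourierChar_apply, harg, smul_eq_mul]
  change (Complex.exp (↑(-(c * x)) * Complex.I) * (f x : ℂ)).re = _
  rw [Complex.re_mul_ofReal, Complex.exp_ofReal_mul_I_re, cos_neg]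

theorem tendsto_intervalIntegral_cos_mul_mul_atTop {f : ℝ → ℝ} {a b : ℝ}
    (hf : IntervalIntegrable f volume a b) :
    Tendsto (fun c : ℝ => ∫ x in a..b, cos (c * x) * f x) atTop (𝓝 0) := by
  have hset : ∀ {s : Set ℝ}, MeasurableSet s → IntegrableOn f s →
      Tendsto (fun c : ℝ => ∫ x in s, cos (c * x) * f x) atTop (𝓝 0) := by
    intro s hs hfs
    simpa only [← MeasureTheory.integral_indicator hs, indicator_mul_right] using
      tendsto_integral_cos_mul_mul_atTop ((integrable_indicator_iff hs).2 hfs)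
  simpa only [intervalIntegral, sub_zero] using
    (hset measurableSet_Ioc hf.1).sub (hset measurableSet_Ioc hf.2)

noncomputable def sinRatioIntegral (a : ℝ) : ℝ :=
  ∫ θ in (0 : ℝ)..(π / 2), sin (a * θ) / sin θ

theorem intervalIntegrable_sin_mul_div_sin (a : ℝ) :
    IntervalIntegrable (fun θ => sin (a * θ) / sin θ) volume 0 (π / 2) := by
  rw [intervalIntegrable_iff_integrableOn_Ioc_of_le (by positivity)]
  refine Integrable.mono' (integrable_const (|a| * (π / 2)))
    (Measurable.aestronglyMeasurable (by fun_prop)) ?_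
  filter_upwards [ae_restrict_mem measurableSet_Ioc] with θ ⟨hθ₀, hθ⟩
  have hjordan : 2 / π * θ ≤ sin θ := mul_le_sin hθ₀.le hθ
  have hsin : 0 < sin θ := lt_of_lt_of_le (by positivity) hjordan
  rw [norm_eq_abs, abs_div, abs_of_pos hsin, div_le_iff₀ hsin]
  calc |sin (a * θ)| ≤ |a * θ| := abs_sin_le_abs
    _ = |a| * (π / 2) * (2 / π * θ) := by rw [abs_mul, abs_of_pos hθ₀]; field_simp
    _ ≤ |a| * (π / 2) * sin θ := by gcongr

theorem sin_div_sin_self_of_mem_uIoc {θ : ℝ} (hθ : θ ∈ Ι 0 (π / 2)) :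
    sin θ / sin θ = 1 := by
  rw [uIoc_of_le (by positivity)] at hθ
  exact div_self (sin_pos_of_pos_of_lt_pi hθ.1 (by linarith [hθ.2, pi_pos])).ne'

theorem sinRatioIntegral_one : sinRatioIntegral 1 = π / 2 := by
  rw [sinRatioIntegral, intervalIntegral.integral_congr_ae (g := fun _ => 1)
    (ae_of_all _ fun θ hθ => by rw [one_mul, sin_div_sin_self_of_mem_uIoc hθ])]
  simp

theorem sinRatioIntegral_add_sub_sub (p q : ℝ) :
    sinRatioIntegral (p + q) - sinRatioIntegral (p - q) =
      ∫ θ in (0 : ℝ)..(π / 2), 2 * cos (p * θ) * (sin (q * θ) / sin θ) := by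
  rw [sinRatioIntegral, sinRatioIntegral, ← integral_sub
    (intervalIntegrable_sin_mul_div_sin _) (intervalIntegrable_sin_mul_div_sin _)]
  congr 1
  funext θ
  rw [← sub_div, Real.sin_sub_sin, show ((p + q) * θ - (p - q) * θ) / 2 = q * θ by ring,
    show ((p + q) * θ + (p - q) * θ) / 2 = p * θ by ring]
  ring

theorem sinRatioIntegral_add_one_sub_sub_one {p : ℝ} (hp : p ≠ 0) :
    sinRatioIntegral (p + 1) - sinRatioIntegral (p - 1) = 2 * sin (p * π / 2) / p := by
  rw [sinRatioIntegral_add_sub_sub,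
    intervalIntegral.integral_congr_ae (g := fun θ => 2 * cos (p * θ))
      (ae_of_all _ fun θ hθ => by rw [one_mul, sin_div_sin_self_of_mem_uIoc hθ, mul_one]),
    intervalIntegral.integral_const_mul, integral_comp_mul_left cos hp, integral_cos, mul_zero,
    sin_zero, sub_zero, smul_eq_mul]
  field_simp

theorem sinRatioIntegral_two_mul_nat_add_one (n : ℕ) :
    sinRatioIntegral (2 * n + 1) = π / 2 := by
  induction n with
  | zero => simpa using sinRatioIntegral_one
  | succ n ih =>
    have hrec := sinRatioIntegral_add_one_sub_sub_one (p := 2 * n + 2) (by positivity)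
    have hsin : sin ((2 * n + 2) * π / 2) = 0 := by
      rw [show (2 * n + 2) * π / 2 = (n + 1 : ℕ) * π by push_cast; ring]
      exact sin_nat_mul_pi _
    rw [hsin, mul_zero, zero_div, show (2 * n + 2 : ℝ) - 1 = 2 * n + 1 by ring, ih] at hrec
    rw [show 2 * ((n + 1 : ℕ) : ℝ) + 1 = 2 * n + 2 + 1 by push_cast; ring]
    linarith

theorem tendsto_sinRatioIntegral_add_two_mul_nat (a : ℝ) :
    Tendsto (fun K : ℕ => sinRatioIntegral (a + 2 * K)) atTop (𝓝 (π / 2)) := by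
  set p : ℕ → ℝ := fun K => (a + 1) / 2 + 2 * K
  set q : ℝ := (a - 1) / 2
  have hp : Tendsto p atTop atTop :=
    tendsto_atTop_add_const_left _ _
      ((tendsto_natCast_atTop_atTop (R := ℝ)).const_mul_atTop two_pos)
  have hRL := (tendsto_intervalIntegral_cos_mul_mul_atTop
    ((intervalIntegrable_sin_mul_div_sin q).const_mul 2)).comp hp
  have hdiff : ∀ K : ℕ, sinRatioIntegral (a + 2 * K) - π / 2 =
      ∫ θ in (0 : ℝ)..(π / 2), cos (p K * θ) * (2 * (sin (q * θ) / sin θ)) := by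
    intro K
    calc sinRatioIntegral (a + 2 * K) - π / 2
        = sinRatioIntegral (p K + q) - sinRatioIntegral (p K - q) := by
          rw [show p K + q = a + 2 * K by simp only [p, q]; ring,
            show p K - q = 2 * K + 1 by simp only [p, q]; ring,
            sinRatioIntegral_two_mul_nat_add_one]
      _ = _ := by
          rw [sinRatioIntegral_add_sub_sub]
          simp only [mul_assoc, mul_left_comm]
  simpa using (hRL.congr fun K => (hdiff K).symm).add_const (π / 2)

theorem sinRatioIntegral_eq_add_sum {ν : ℝ} (hν : -1 < ν) (K : ℕ) :
    sinRatioIntegral (2 * ν + 1) = sinRatioIntegral (2 * ν + 1 + 2 * K) +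
      sin (ν * π) * ∑ k ∈ Finset.range K, (-1) ^ k / (ν + 1 + k) := by
  induction K with
  | zero => simp
  | succ K ih =>
    have hpos : 0 < ν + 1 + K := add_pos_of_pos_of_nonneg (by linarith) K.cast_nonneg
    have hrec := sinRatioIntegral_add_one_sub_sub_one (mul_pos two_pos hpos).ne'
    have hsin : sin (2 * (ν + 1 + K) * π / 2) = (-1) ^ (K + 1) * sin (ν * π) := by
      rw [show 2 * (ν + 1 + K) * π / 2 = ν * π + (K + 1 : ℕ) * π by push_cast; ring,
        sin_add_nat_mul_pi]
    rw [hsin, show 2 * (ν + 1 + K) - 1 = 2 * ν + 1 + 2 * K by ring,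
      show 2 * (ν + 1 + K) + 1 = 2 * ν + 1 + 2 * (K + 1 : ℕ) by push_cast; ring] at hrec
    rw [ih, Finset.sum_range_succ]
    rw [pow_succ] at hrec
    field_simp at hrec ⊢
    linear_combination -hrec

theorem differentiableAt_log_Gamma {x : ℝ} (hx : ∀ m : ℕ, x ≠ -m) :
    DifferentiableAt ℝ (fun y => log (Gamma y)) x :=
  (differentiableAt_Gamma hx).log (Gamma_ne_zero hx)

theorem digamma_add_one {x : ℝ} (hx : ∀ m : ℕ, x ≠ -m) :
    digamma (x + 1) = digamma x + 1 / x := by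
  have hx₀ : x ≠ 0 := by simpa using hx 0
  have hlog : (fun y => log (Gamma (y + 1))) =ᶠ[𝓝 x] fun y => log y + log (Gamma y) := by
    filter_upwards [eventually_ne_nhds hx₀,
      (differentiableAt_Gamma hx).continuousAt.eventually_ne (Gamma_ne_zero hx)] with y hy hΓ
    rw [Gamma_add_one hy, log_mul hy hΓ]
  rw [digamma, digamma, ← deriv_comp_add_const, hlog.deriv_eq,
    deriv_fun_add (differentiableAt_log hx₀) (differentiableAt_log_Gamma hx), deriv_log,
    one_div, add_comm]

theorem digamma_monotoneOn : MonotoneOn digamma (Ioi 0) :=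
  convexOn_log_Gamma.monotoneOn_deriv fun _ hx =>
    differentiableAt_log_Gamma fun m => ((neg_nonpos.2 m.cast_nonneg).trans_lt hx).ne'

section NielsenBeta

/-- Nielsen's beta function `β x = ∑_{k ≥ 0} (-1)^k / (x + k)`. -/
noncomputable def nielsenBeta (x : ℝ) : ℝ := (digamma ((x + 1) / 2) - digamma (x / 2)) / 2

variable {x : ℝ}

theorem nielsenBeta_add_nielsenBeta_add_one (hx : 0 < x) :
    nielsenBeta x + nielsenBeta (x + 1) = 1 / x := by
  have h := digamma_add_one (x := x / 2) fun m =>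
    ((neg_nonpos.2 m.cast_nonneg).trans_lt (by positivity)).ne'
  rw [nielsenBeta, nielsenBeta, show (x + 1 + 1) / 2 = x / 2 + 1 by ring, h]
  field_simp
  ring

theorem nielsenBeta_nonneg (hx : 0 < x) : 0 ≤ nielsenBeta x := by
  rw [nielsenBeta, sub_div, sub_nonneg]
  gcongr
  exact digamma_monotoneOn (show 0 < x / 2 by positivity) (show 0 < (x + 1) / 2 by positivity)
    (by linarith)

theorem nielsenBeta_le (hx : 0 < x) : nielsenBeta x ≤ 1 / x := by
  linarith [nielsenBeta_add_nielsenBeta_add_one hx, nielsenBeta_nonneg (by linarith : 0 < x + 1)]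

theorem nielsenBeta_eq_sum_add (hx : 0 < x) (K : ℕ) :
    nielsenBeta x =
      ∑ k ∈ Finset.range K, (-1) ^ k / (x + k) + (-1) ^ K * nielsenBeta (x + K) := by
  induction K with
  | zero => simp
  | succ K ih =>
    have hrec := nielsenBeta_add_nielsenBeta_add_one (x := x + K) (by positivity)
    rw [ih, Finset.sum_range_succ, Nat.cast_succ, ← add_assoc]
    linear_combination (-1) ^ K * hrec

theorem tendsto_sum_range_neg_one_pow_div_add (hx : 0 < x) :
    Tendsto (fun K : ℕ => ∑ k ∈ Finset.range K, (-1) ^ k / (x + k)) atTop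
      (𝓝 (nielsenBeta x)) := by
  have htail : Tendsto (fun K : ℕ => (-1) ^ K * nielsenBeta (x + K)) atTop (𝓝 0) := by
    refine squeeze_zero_norm (fun K => ?_) ((tendsto_const_nhds (x := (1 : ℝ))).div_atTop
      (tendsto_atTop_add_const_left _ x tendsto_natCast_atTop_atTop))
    have hK : 0 < x + K := by positivity
    rw [norm_mul, norm_pow, norm_neg, norm_one, one_pow, one_mul, norm_of_nonneg
      (nielsenBeta_nonneg hK)]
    exact nielsenBeta_le hK
  have hlim := (tendsto_const_nhds (x := nielsenBeta x)).sub htail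
  rw [sub_zero] at hlim
  exact hlim.congr fun K => by linear_combination nielsenBeta_eq_sum_add hx K

end NielsenBeta

theorem stmt_0 (ν : ℝ) (h₁ : -1 < ν) :
    ∫ θ in (0:ℝ)..(π/2), Real.sin ((2*ν+1)*θ) / Real.sin θ =
      π/2 + (Real.sin (ν*π) / 2) * (digamma ((ν+2)/2) - digamma ((ν+1)/2)) := by
  have hlim := (tendsto_sinRatioIntegral_add_two_mul_nat (2 * ν + 1)).add
    ((tendsto_sum_range_neg_one_pow_div_add (by linarith : 0 < ν + 1)).const_mul (sin (ν * π)))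
  have hI : sinRatioIntegral (2 * ν + 1) = π / 2 + sin (ν * π) * nielsenBeta (ν + 1) :=
    tendsto_nhds_unique (tendsto_const_nhds.congr (sinRatioIntegral_eq_add_sum h₁)) hlim
  rw [← sinRatioIntegral, hI, nielsenBeta, show (ν + 1 + 1) / 2 = (ν + 2) / 2 by ring]
  ring
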